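/- Let W be a scale function for ψ. If m < 1 then lim_{t→∞} W(t) = 1/(1 − m), while if m ≥ 1 then lim_{t→∞} W(t) = +∞. -/

import Mathlib

open MeasureTheory Real Set Filter Topology

/-!
For nondecreasing `W ≥ 0` and `λ > 0`, `W T e^{-λT} ≤ λ ∫₀^∞ e^{-λx} W x dx ≤ sup W`, and the
middle term equals `λ / ψ λ` beyond `η`. Dominated convergence gives `ψ λ / λ → 1 - m` as
`λ ↓ 0`. If `m < 1` then `ψ λ ≥ λ (1 - m) > 0`, so `η = 0`, and letting `λ ↓ 0` squeezes `W`
to `1 / (1 - m)`. If `m ≥ 1` and `W ≤ C`, then `λ ≤ C ψ λ` for `λ > η`; right-continuity of `ψ`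
at its root `η` forces `η = 0`, and then `1 ≤ C (1 - m) ≤ 0`.
-/

section MonotoneLaplaceTransform

variable {W : ℝ → ℝ} {l : ℝ}

lemma integral_exp_neg_mul_Ioi (hl : 0 < l) (a : ℝ) :
    ∫ x in Ioi a, exp (-l * x) = exp (-l * a) / l := by
  rw [integral_exp_mul_Ioi (neg_lt_zero.2 hl), neg_div_neg_eq]

lemma mul_setIntegral_exp_neg_mul_le (hl : 0 < l)
    (hint : IntegrableOn (fun x => exp (-l * x) * W x) (Ioi 0)) {c : ℝ}
    (hc : ∀ x ∈ Ioi (0 : ℝ), W x ≤ c) :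
    l * ∫ x in Ioi 0, exp (-l * x) * W x ≤ c := by
  have hmono : ∫ x in Ioi 0, exp (-l * x) * W x ≤ ∫ x in Ioi 0, exp (-l * x) * c :=
    setIntegral_mono_on hint ((exp_neg_integrableOn_Ioi 0 hl).mul_const c) measurableSet_Ioi
      fun x hx => mul_le_mul_of_nonneg_left (hc x hx) (exp_pos _).le
  rw [integral_mul_const, integral_exp_neg_mul_Ioi hl, mul_zero, exp_zero] at hmono
  calc l * ∫ x in Ioi 0, exp (-l * x) * W x ≤ l * (1 / l * c) := by gcongr
    _ = c := by field_simp

lemma mul_exp_neg_mul_le_mul_setIntegral (hmono : MonotoneOn W (Ici 0))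
    (hnn : ∀ x ∈ Ioi (0 : ℝ), 0 ≤ W x) (hl : 0 < l)
    (hint : IntegrableOn (fun x => exp (-l * x) * W x) (Ioi 0)) {T : ℝ} (hT : 0 ≤ T) :
    W T * exp (-l * T) ≤ l * ∫ x in Ioi 0, exp (-l * x) * W x := by
  have htail : ∫ x in Ioi T, exp (-l * x) * W T ≤ ∫ x in Ioi T, exp (-l * x) * W x :=
    setIntegral_mono_on ((exp_neg_integrableOn_Ioi T hl).mul_const _)
      (hint.mono_set (Ioi_subset_Ioi hT)) measurableSet_Ioi fun x hx =>
        mul_le_mul_of_nonneg_left (hmono hT (hT.trans hx.le) hx.le) (exp_pos _).le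
  have hdrop : ∫ x in Ioi T, exp (-l * x) * W x ≤ ∫ x in Ioi 0, exp (-l * x) * W x :=
    setIntegral_mono_set hint
      ((ae_restrict_iff' measurableSet_Ioi).2 (ae_of_all _ fun x hx =>
        mul_nonneg (exp_pos _).le (hnn x hx)))
      (Ioi_subset_Ioi hT).eventuallyLE
  rw [integral_mul_const, integral_exp_neg_mul_Ioi hl] at htail
  calc W T * exp (-l * T) = l * (exp (-l * T) / l * W T) := by field_simp
    _ ≤ l * ∫ x in Ioi 0, exp (-l * x) * W x := by gcongr; linarith

theorem tendsto_atTop_of_tendsto_mul_setIntegral_exp_neg_mul (hmono : MonotoneOn W (Ici 0))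
    (hnn : ∀ x ∈ Ioi (0 : ℝ), 0 ≤ W x)
    (hint : ∀ l > 0, IntegrableOn (fun x => exp (-l * x) * W x) (Ioi 0)) {L : ℝ}
    (hL : Tendsto (fun l => l * ∫ x in Ioi 0, exp (-l * x) * W x) (𝓝[>] 0) (𝓝 L)) :
    Tendsto W atTop (𝓝 L) := by
  have hle : ∀ T, 0 ≤ T → W T ≤ L := by
    intro T hT
    have hexp : Tendsto (fun l => W T * exp (-l * T)) (𝓝[>] 0) (𝓝 (W T)) := by
      have : Continuous fun l => W T * exp (-l * T) := by fun_prop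
      simpa using (this.tendsto 0).mono_left nhdsWithin_le_nhds
    refine le_of_tendsto_of_tendsto hexp hL ?_
    filter_upwards [self_mem_nhdsWithin] with l hl
      using mul_exp_neg_mul_le_mul_setIntegral hmono hnn hl (hint l hl) hT
  refine tendsto_order.2 ⟨fun a ha => ?_, fun b hb => ?_⟩
  · obtain ⟨x₀, hx₀, hax₀⟩ : ∃ x₀ ∈ Ioi (0 : ℝ), a < W x₀ := by
      by_contra! hbound
      refine ha.not_ge (le_of_tendsto hL ?_)
      filter_upwards [self_mem_nhdsWithin] with l hl
        using mul_setIntegral_exp_neg_mul_le hl (hint l hl) hbound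
    filter_upwards [eventually_ge_atTop x₀] with x hx
      using hax₀.trans_le (hmono (Ioi_subset_Ici_self hx₀) (hx₀.le.trans hx) hx)
  · filter_upwards [eventually_ge_atTop 0] with x hx using (hle x hx).trans_lt hb

lemma MonotoneOn.exists_forall_le_of_not_tendsto_atTop (hmono : MonotoneOn W (Ici 0))
    (h : ¬Tendsto W atTop atTop) : ∃ C, ∀ x ∈ Ioi (0 : ℝ), W x ≤ C := by
  rw [tendsto_atTop_atTop] at h
  push Not at h
  obtain ⟨C, hC⟩ := h
  refine ⟨C, fun x hx => ?_⟩
  obtain ⟨y, hxy, hy⟩ := hC x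
  exact (hmono (Ioi_subset_Ici_self hx) (hx.le.trans hxy) hxy).trans hy.le

end MonotoneLaplaceTransform

noncomputable def laplaceExponent (ν : Measure ℝ) (l : ℝ) : ℝ :=
  l - ∫ r, (1 - exp (-l * r)) ∂ν

noncomputable def laplaceExponentRoot (ν : Measure ℝ) : ℝ :=
  sSup {l : ℝ | 0 ≤ l ∧ laplaceExponent ν l = 0}

lemma one_sub_exp_neg_mul_mem_Icc {l r : ℝ} (hl : 0 ≤ l) (hr : 0 ≤ r) :
    1 - exp (-l * r) ∈ Icc 0 1 :=
  ⟨sub_nonneg.2 (exp_le_one_iff.2 (by nlinarith)), by linarith [exp_pos (-l * r)]⟩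

lemma one_sub_exp_neg_mul_le (l r : ℝ) : 1 - exp (-l * r) ≤ l * r := by
  rw [neg_mul]
  linarith [one_sub_le_exp_neg (l * r)]

lemma tendsto_one_sub_exp_neg_mul_div (r : ℝ) :
    Tendsto (fun l => (1 - exp (-l * r)) / l) (𝓝[>] 0) (𝓝 r) := by
  have hderiv : HasDerivAt (fun l => 1 - exp (-l * r)) r 0 := by
    simpa using (((hasDerivAt_neg 0).mul_const r).exp).const_sub 1
  simpa [div_eq_inv_mul] using hderiv.tendsto_slope_zero_right

section LaplaceExponent

variable {ν : Measure ℝ} {l : ℝ}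

lemma laplaceExponent_zero : laplaceExponent ν 0 = 0 := by simp [laplaceExponent]

lemma ae_norm_one_sub_exp_neg_mul_le_one (hν : ∀ᵐ r ∂ν, 0 ≤ r) (hl : 0 ≤ l) :
    ∀ᵐ r ∂ν, ‖1 - exp (-l * r)‖ ≤ 1 := by
  filter_upwards [hν] with r hr
  obtain ⟨h₀, h₁⟩ := one_sub_exp_neg_mul_mem_Icc hl hr
  rwa [norm_of_nonneg h₀]

lemma tendsto_laplaceExponent_div_nhdsGT_zero (hν : ∀ᵐ r ∂ν, 0 ≤ r)
    (hint : Integrable (fun r => r) ν) :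
    Tendsto (fun l => laplaceExponent ν l / l) (𝓝[>] 0) (𝓝 (1 - ∫ r, r ∂ν)) := by
  have hslope : Tendsto (fun l => ∫ r, (1 - exp (-l * r)) / l ∂ν) (𝓝[>] 0)
      (𝓝 (∫ r, r ∂ν)) := by
    refine tendsto_integral_filter_of_dominated_convergence _ (Eventually.of_forall
      fun _ => by fun_prop) ?_ hint (ae_of_all _ tendsto_one_sub_exp_neg_mul_div)
    filter_upwards [self_mem_nhdsWithin] with l (hl : 0 < l)
    filter_upwards [hν] with r hr
    obtain ⟨h₀, -⟩ := one_sub_exp_neg_mul_mem_Icc hl.le hr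
    rw [norm_of_nonneg (div_nonneg h₀ hl.le), div_le_iff₀' hl]
    exact one_sub_exp_neg_mul_le l r
  refine (tendsto_const_nhds.sub hslope).congr' ?_
  filter_upwards [self_mem_nhdsWithin] with l (hl : 0 < l)
  rw [integral_div, laplaceExponent, sub_div, div_self hl.ne']

variable [IsFiniteMeasure ν]

lemma integrable_one_sub_exp_neg_mul (hν : ∀ᵐ r ∂ν, 0 ≤ r) (hl : 0 ≤ l) :
    Integrable (fun r => 1 - exp (-l * r)) ν :=
  (integrable_const 1).mono' (by fun_prop) (ae_norm_one_sub_exp_neg_mul_le_one hν hl)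

lemma sub_measureReal_univ_le_laplaceExponent (hν : ∀ᵐ r ∂ν, 0 ≤ r) (hl : 0 ≤ l) :
    l - ν.real univ ≤ laplaceExponent ν l := by
  have : ∫ r, (1 - exp (-l * r)) ∂ν ≤ ∫ _, (1 : ℝ) ∂ν :=
    integral_mono_ae (integrable_one_sub_exp_neg_mul hν hl) (integrable_const 1)
      (by filter_upwards [hν] with r hr using (one_sub_exp_neg_mul_mem_Icc hl hr).2)
  rw [integral_const, smul_eq_mul, mul_one] at this
  unfold laplaceExponent
  linarith

lemma mul_one_sub_integral_le_laplaceExponent (hν : ∀ᵐ r ∂ν, 0 ≤ r)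
    (hint : Integrable (fun r => r) ν) (hl : 0 ≤ l) :
    l * (1 - ∫ r, r ∂ν) ≤ laplaceExponent ν l := by
  have : ∫ r, (1 - exp (-l * r)) ∂ν ≤ ∫ r, l * r ∂ν :=
    integral_mono (integrable_one_sub_exp_neg_mul hν hl) (hint.const_mul l)
      (one_sub_exp_neg_mul_le l)
  rw [integral_const_mul] at this
  unfold laplaceExponent
  linarith

lemma continuousOn_laplaceExponent (hν : ∀ᵐ r ∂ν, 0 ≤ r) :
    ContinuousOn (laplaceExponent ν) (Ici 0) :=
  continuousOn_id.sub <| continuousOn_of_dominated (fun _ _ => by fun_prop)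
    (fun _ hl => ae_norm_one_sub_exp_neg_mul_le_one hν hl) (integrable_const 1)
    (ae_of_all _ fun _ => by fun_prop)

lemma bddAbove_setOf_laplaceExponent_eq_zero (hν : ∀ᵐ r ∂ν, 0 ≤ r) :
    BddAbove {l : ℝ | 0 ≤ l ∧ laplaceExponent ν l = 0} :=
  ⟨ν.real univ, fun l hl => by
    linarith [sub_measureReal_univ_le_laplaceExponent hν hl.1, hl.2]⟩

lemma laplaceExponentRoot_nonneg (hν : ∀ᵐ r ∂ν, 0 ≤ r) : 0 ≤ laplaceExponentRoot ν :=
  le_csSup (bddAbove_setOf_laplaceExponent_eq_zero hν) ⟨le_rfl, laplaceExponent_zero⟩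

lemma laplaceExponent_laplaceExponentRoot (hν : ∀ᵐ r ∂ν, 0 ≤ r) :
    laplaceExponent ν (laplaceExponentRoot ν) = 0 :=
  (IsClosed.csSup_mem ((continuousOn_laplaceExponent hν).preimage_isClosed_of_isClosed
    isClosed_Ici isClosed_singleton) ⟨0, self_mem_Ici, laplaceExponent_zero⟩
    (bddAbove_setOf_laplaceExponent_eq_zero hν)).2

lemma laplaceExponent_ne_zero_of_laplaceExponentRoot_lt (hν : ∀ᵐ r ∂ν, 0 ≤ r)
    (h : laplaceExponentRoot ν < l) : laplaceExponent ν l ≠ 0 := fun h₀ =>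
  h.not_ge (le_csSup (bddAbove_setOf_laplaceExponent_eq_zero hν)
    ⟨(laplaceExponentRoot_nonneg hν).trans h.le, h₀⟩)

lemma laplaceExponentRoot_eq_zero_of_integral_lt_one (hν : ∀ᵐ r ∂ν, 0 ≤ r)
    (hint : Integrable (fun r => r) ν) (h : ∫ r, r ∂ν < 1) : laplaceExponentRoot ν = 0 := by
  refine le_antisymm (csSup_le ⟨0, le_rfl, laplaceExponent_zero⟩ ?_)
    (laplaceExponentRoot_nonneg hν)
  rintro l ⟨hl, h₀⟩
  nlinarith [mul_one_sub_integral_le_laplaceExponent hν hint hl]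

lemma exists_mul_laplaceExponent_lt_of_one_le_integral (hν : ∀ᵐ r ∂ν, 0 ≤ r)
    (hint : Integrable (fun r => r) ν) (h : 1 ≤ ∫ r, r ∂ν) {C : ℝ} (hC : 0 ≤ C) :
    ∃ l, laplaceExponentRoot ν < l ∧ C * laplaceExponent ν l < l := by
  by_contra! hle
  have hright : ∀ᶠ l in 𝓝[>] laplaceExponentRoot ν, l ≤ C * laplaceExponent ν l :=
    eventually_nhdsWithin_of_forall hle
  have hη := laplaceExponentRoot_nonneg hν
  have hroot : laplaceExponentRoot ν = 0 := by
    have hcont : Tendsto (fun l => C * laplaceExponent ν l) (𝓝[>] laplaceExponentRoot ν)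
        (𝓝 (C * laplaceExponent ν (laplaceExponentRoot ν))) :=
      (((continuousOn_laplaceExponent hν).continuousWithinAt hη).mono
        (Ioi_subset_Ici hη)).tendsto.const_mul C
    have := le_of_tendsto_of_tendsto (tendsto_id.mono_left nhdsWithin_le_nhds) hcont hright
    rw [laplaceExponent_laplaceExponentRoot hν, mul_zero] at this
    exact le_antisymm this hη
  rw [hroot] at hright
  have : 1 ≤ C * (1 - ∫ r, r ∂ν) := by
    refine ge_of_tendsto ((tendsto_laplaceExponent_div_nhdsGT_zero hν hint).const_mul C) ?_
    filter_upwards [hright, self_mem_nhdsWithin] with l hl (hl₀ : 0 < l)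
    rw [← mul_div_assoc, le_div_iff₀ hl₀, one_mul]
    exact hl
  nlinarith

end LaplaceExponent

theorem scale_function_limit_at_infinity_general
    (ν : Measure ℝ) [IsFiniteMeasure ν] (hsupp : ν (Set.Iic 0) = 0)
    (hint : Integrable (fun r : ℝ => r) ν)
    (m : ℝ) (hm : m = ∫ r, r ∂ν)
    (ψ : ℝ → ℝ) (hψ : ψ = fun l : ℝ => l - ∫ r, (1 - Real.exp (-l * r)) ∂ν)
    (η : ℝ) (hη : η = sSup {l : ℝ | 0 ≤ l ∧ ψ l = 0})
    (W : ℝ → ℝ) (hWmono : MonotoneOn W (Set.Ici 0))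
    (hWnonneg : ∀ x ∈ Set.Ici (0 : ℝ), 0 ≤ W x)
    (hW : ∀ l : ℝ, η < l →
      ∫ x in Set.Ioi (0 : ℝ), Real.exp (-l * x) * W x = 1 / ψ l) :
    (m < 1 → Tendsto W atTop (𝓝 (1 / (1 - m)))) ∧
      (1 ≤ m → Tendsto W atTop atTop) := by
  obtain rfl : ψ = laplaceExponent ν := hψ
  obtain rfl : η = laplaceExponentRoot ν := hη
  subst hm
  have hν : ∀ᵐ r ∂ν, 0 ≤ r :=
    ae_iff.2 (measure_mono_null (fun r hr => (not_le.1 hr).le) hsupp)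
  have hnn : ∀ x ∈ Ioi (0 : ℝ), 0 ≤ W x := fun x hx => hWnonneg x (Ioi_subset_Ici_self hx)
  have hpos : ∀ l > laplaceExponentRoot ν, 0 < laplaceExponent ν l := fun l hl => by
    have : 0 ≤ 1 / laplaceExponent ν l := hW l hl ▸ setIntegral_nonneg measurableSet_Ioi
      fun x hx => mul_nonneg (exp_pos _).le (hnn x hx)
    exact (one_div_nonneg.1 this).lt_of_ne'
      (laplaceExponent_ne_zero_of_laplaceExponentRoot_lt hν hl)
  have hintW : ∀ l > laplaceExponentRoot ν,
      IntegrableOn (fun x => exp (-l * x) * W x) (Ioi 0) := fun l hl => by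
    by_contra h
    exact one_div_ne_zero (hpos l hl).ne' ((hW l hl).symm.trans (integral_undef h))
  have hlap : ∀ l > laplaceExponentRoot ν,
      l * ∫ x in Ioi 0, exp (-l * x) * W x = l / laplaceExponent ν l := fun l hl => by
    rw [hW l hl, mul_one_div]
  refine ⟨fun hm1 => ?_, fun hm1 => ?_⟩
  · rw [laplaceExponentRoot_eq_zero_of_integral_lt_one hν hint hm1] at hlap hintW
    refine tendsto_atTop_of_tendsto_mul_setIntegral_exp_neg_mul hWmono hnn hintW ?_
    rw [one_div]
    refine ((tendsto_laplaceExponent_div_nhdsGT_zero hν hint).inv₀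
      (sub_ne_zero.2 hm1.ne')).congr' ?_
    filter_upwards [self_mem_nhdsWithin] with l hl
    rw [hlap l hl, inv_div]
  · by_contra hunbdd
    obtain ⟨C, hC⟩ := hWmono.exists_forall_le_of_not_tendsto_atTop hunbdd
    have hC₀ : 0 ≤ C := (hnn 1 (mem_Ioi.2 one_pos)).trans (hC 1 (mem_Ioi.2 one_pos))
    obtain ⟨l, hl, hCl⟩ := exists_mul_laplaceExponent_lt_of_one_le_integral hν hint hm1 hC₀
    have := mul_setIntegral_exp_neg_mul_le ((laplaceExponentRoot_nonneg hν).trans_lt hl)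
      (hintW l hl) hC
    rw [hlap l hl, div_le_iff₀ (hpos l hl)] at this
    linarith

/-- A scale function `W` for `ψ` satisfies `W(t) → 1/(1-m)` as `t → ∞` if `m < 1`,
and `W(t) → +∞` as `t → ∞` if `m ≥ 1`. -/
theorem scale_function_limit_at_infinity
    (ν : Measure ℝ) [IsFiniteMeasure ν] (hsupp : ν (Set.Iic 0) = 0)
    (hint : Integrable (fun r : ℝ => r) ν)
    (m : ℝ) (hm : m = ∫ r, r ∂ν)
    (ψ : ℝ → ℝ) (hψ : ψ = fun l : ℝ => l - ∫ r, (1 - Real.exp (-l * r)) ∂ν)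
    (η : ℝ) (hη : η = sSup {l : ℝ | 0 ≤ l ∧ ψ l = 0})
    (W : ℝ → ℝ) (hWc : ContinuousOn W (Set.Ici 0)) (hWmono : MonotoneOn W (Set.Ici 0))
    (hWnonneg : ∀ x ∈ Set.Ici (0 : ℝ), 0 ≤ W x)
    (hW : ∀ l : ℝ, η < l →
      ∫ x in Set.Ioi (0 : ℝ), Real.exp (-l * x) * W x = 1 / ψ l) :
    (m < 1 → Tendsto W atTop (𝓝 (1 / (1 - m)))) ∧
      (1 ≤ m → Tendsto W atTop atTop) :=
  scale_function_limit_at_infinity_general ν hsupp hint m hm ψ hψ η hη W hWmono hWnonneg hW
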